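/- arXiv:2206.08818 — 7 statements merged into one kernel-verified Lean document; each statement's English description precedes it below -/
import Mathlib

section
/- Let V be a finite-dimensional real normed vector space and γ ⊆ V a closed proper convex cone with nonempty interior. For every v in the interior of the antipodal cone γ^a = −γ, the set B_v := (v + γ) ∩ (−v + γ^a) is convex, closed, bounded, symmetric (that is, −B_v = B_v), and 0 belongs to the interior of B_v. -/
/-!
Writing `B_v = {x | x - v ∈ γ ∧ -v - x ∈ γ}`, convexity, closedness and symmetry are inherited
from `γ`, and `0` is interior because `-v ∈ interior γ`. Boundedness comes from pointedness:
`-s ∉ γ` for `s` on the compact set `γ ∩ sphere 0 1`, so `‖s + z‖` is bounded below by some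
`ε > 0` for `z ∈ γ`; by homogeneity `‖y‖ ≤ ε⁻¹ ‖y + z‖` for `y, z ∈ γ`, and for `x ∈ B_v` the two
summands `x - v` and `-v - x` add up to `-2v`.
-/

open Pointwise Metric Set

/-- The set `B_v = (v + γ) ∩ (-v + γ^a)` where `γ^a = -γ`. -/
def coneBall {V : Type*} [AddGroup V] (γ : Set V) (v : V) : Set V :=
  (v +ᵥ γ) ∩ ((-v) +ᵥ (-γ))

section coneBall

variable {V : Type*} [AddCommGroup V] {γ : Set V} {v x : V}

theorem mem_coneBall_iff : x ∈ coneBall γ v ↔ x - v ∈ γ ∧ -v - x ∈ γ := by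
  simp only [coneBall, mem_inter_iff, mem_vadd_set_iff_neg_vadd_mem, vadd_eq_add, neg_neg,
    mem_neg, neg_add_eq_sub, neg_add']

theorem neg_coneBall : -coneBall γ v = coneBall γ v := by
  ext x
  simp only [mem_neg, mem_coneBall_iff, sub_neg_eq_add, neg_add_eq_sub, neg_sub_comm, and_comm]

theorem Convex.coneBall {𝕜 : Type*} [Ring 𝕜] [PartialOrder 𝕜] [Module 𝕜 V]
    (hγ : Convex 𝕜 γ) : Convex 𝕜 (coneBall γ v) :=
  (hγ.vadd v).inter (hγ.neg.vadd (-v))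

variable [TopologicalSpace V] [IsTopologicalAddGroup V]

theorem IsClosed.coneBall (hγ : IsClosed γ) : IsClosed (coneBall γ v) :=
  (hγ.vadd v).inter (hγ.neg.vadd (-v))

theorem zero_mem_interior_coneBall (hv : v ∈ interior (-γ)) : 0 ∈ interior (coneBall γ v) := by
  have hnegv : -v ∈ interior γ := by
    have hv' : v ∈ interior (Homeomorph.neg V ⁻¹' γ) := hv
    rwa [← Homeomorph.preimage_interior] at hv'
  rw [coneBall, interior_inter, interior_vadd, interior_vadd]
  simpa [mem_vadd_set_iff_neg_vadd_mem] using ⟨hnegv, hv⟩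

end coneBall

section PointedCone

variable {V : Type*} [NormedAddCommGroup V] [ProperSpace V] {γ : Set V}

theorem exists_pos_le_norm_add_of_pointed_cone (hproper : γ ∩ -γ = {0})
    (hclosed : IsClosed γ) :
    ∃ ε > 0, ∀ s ∈ γ, ‖s‖ = 1 → ∀ z ∈ γ, ε ≤ ‖s + z‖ := by
  have hcompact : IsCompact (γ ∩ sphere (0 : V) 1) := (isCompact_sphere 0 1).inter_left hclosed
  have hpos : ∀ s ∈ γ ∩ sphere (0 : V) 1, 0 < infDist (-s) γ := by
    rintro s ⟨hsγ, hs1⟩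
    rw [← hclosed.notMem_iff_infDist_pos ⟨s, hsγ⟩]
    intro hneg
    have hs0 : s ∈ γ ∩ -γ := ⟨hsγ, hneg⟩
    rw [hproper, mem_singleton_iff] at hs0
    simp [hs0] at hs1
  obtain ⟨ε, hε, hεle⟩ :=
    hcompact.exists_forall_le' ((continuous_infDist_pt γ).comp continuous_neg).continuousOn hpos
  refine ⟨ε, hε, fun s hs hs1 z hz => ?_⟩
  calc ε ≤ infDist (-s) γ := hεle s ⟨hs, by simpa using hs1⟩
    _ ≤ dist (-s) z := infDist_le_dist_of_mem hz
    _ = ‖s + z‖ := by rw [dist_eq_norm, ← neg_add', norm_neg]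

variable [NormedSpace ℝ V]

theorem exists_norm_le_mul_norm_add_of_pointed_cone (hsmul : ∀ t : ℝ, 0 < t → t • γ ⊆ γ)
    (hproper : γ ∩ -γ = {0}) (hclosed : IsClosed γ) :
    ∃ C, ∀ y ∈ γ, ∀ z ∈ γ, ‖y‖ ≤ C * ‖y + z‖ := by
  obtain ⟨ε, hε, hεle⟩ := exists_pos_le_norm_add_of_pointed_cone hproper hclosed
  refine ⟨ε⁻¹, fun y hy z hz => ?_⟩
  rcases eq_or_ne y 0 with rfl | hy0
  · simp only [norm_zero]
    positivity
  have hr : 0 < ‖y‖⁻¹ := inv_pos.2 (norm_pos_iff.2 hy0)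
  have hscaled := hεle (‖y‖⁻¹ • y) (hsmul _ hr (smul_mem_smul_set hy))
    (by rw [norm_smul, norm_inv, norm_norm, inv_mul_cancel₀ (norm_ne_zero_iff.2 hy0)])
    (‖y‖⁻¹ • z) (hsmul _ hr (smul_mem_smul_set hz))
  rw [← smul_add, norm_smul, norm_inv, norm_norm, le_inv_mul_iff₀ (norm_pos_iff.2 hy0)]
    at hscaled
  rw [le_inv_mul_iff₀ hε, mul_comm]
  exact hscaled

theorem isBounded_coneBall (hsmul : ∀ t : ℝ, 0 < t → t • γ ⊆ γ) (hproper : γ ∩ -γ = {0})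
    (hclosed : IsClosed γ) (v : V) : Bornology.IsBounded (coneBall γ v) := by
  obtain ⟨C, hC⟩ := exists_norm_le_mul_norm_add_of_pointed_cone hsmul hproper hclosed
  refine (isBounded_closedBall (x := v) (r := C * ‖v + v‖)).subset fun x hx => ?_
  obtain ⟨hxv, hvx⟩ := mem_coneBall_iff.1 hx
  rw [mem_closedBall, dist_eq_norm]
  calc ‖x - v‖ ≤ C * ‖x - v + (-v - x)‖ := hC _ hxv _ hvx
    _ = C * ‖v + v‖ := by rw [← norm_neg (v + v)]; congr 2; abel

end PointedCone

theorem coneBall_convex_isClosed_isBounded_symmetric_zero_mem_interior_general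
    {V : Type*} [NormedAddCommGroup V] [NormedSpace ℝ V] [FiniteDimensional ℝ V]
    (γ : Set V)
    (hsmul : ∀ t : ℝ, 0 < t → t • γ ⊆ γ)
    (hconv : Convex ℝ γ)
    (hproper : γ ∩ (-γ) = {0})
    (hclosed : IsClosed γ)
    (v : V) (hv : v ∈ interior (-γ)) :
    Convex ℝ (coneBall γ v) ∧
    IsClosed (coneBall γ v) ∧
    Bornology.IsBounded (coneBall γ v) ∧
    -(coneBall γ v) = coneBall γ v ∧
    (0 : V) ∈ interior (coneBall γ v) :=
  ⟨hconv.coneBall, hclosed.coneBall, isBounded_coneBall hsmul hproper hclosed v, neg_coneBall,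
    zero_mem_interior_coneBall hv⟩

/-- for `γ` a closed proper convex cone with nonempty interior in a
finite-dimensional real normed vector space and `v ∈ interior (-γ)`, the set
`B_v = (v + γ) ∩ (-v + γ^a)` is convex, closed, bounded, symmetric, and `0` lies in
its interior. -/
theorem coneBall_convex_isClosed_isBounded_symmetric_zero_mem_interior
    {V : Type*} [NormedAddCommGroup V] [NormedSpace ℝ V] [FiniteDimensional ℝ V]
    (γ : Set V) (hzero : (0 : V) ∈ γ)
    (hsmul : ∀ t : ℝ, 0 < t → t • γ ⊆ γ)
    (hconv : Convex ℝ γ)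
    (hproper : γ ∩ (-γ) = {0})
    (hclosed : IsClosed γ)
    (hint : (interior γ).Nonempty)
    (v : V) (hv : v ∈ interior (-γ)) :
    Convex ℝ (coneBall γ v) ∧
    IsClosed (coneBall γ v) ∧
    Bornology.IsBounded (coneBall γ v) ∧
    -(coneBall γ v) = coneBall γ v ∧
    (0 : V) ∈ interior (coneBall γ v) :=
  coneBall_convex_isClosed_isBounded_symmetric_zero_mem_interior_general γ hsmul hconv hproper
    hclosed v hv
end

section
/- Fix an integer n ≥ 1 and h ∈ ℝⁿ with h_i > 0 for every i, and let γ = (−∞,0]ⁿ. The topological frontier of γ in ℝⁿ is ∂γ = {z ∈ ℝⁿ : z_i ≤ 0 for all i, and z_i = 0 for some i}, and for every s ∈ ℝ the fiber of the push function over y = s • h is p_{L_h}⁻¹({y}) = y + ∂γ. -/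
/-! The orthant is the product of the half-lines `(-∞, 0]`, so its frontier is read off
coordinatewise. Since `h ≠ 0`, `pushFn x = s • h` says that the finite maximum of the
`x i / h i` equals `s`, i.e. `x i ≤ s * h i` for all `i` with equality for some `i`,
which is exactly `x - s • h ∈ ∂γ`. -/

open Pointwise

/-- The push function `p_{L_h}(x) = (max_i x_i / h_i) • h` onto the line `L_h = ℝ • h`. -/
noncomputable def pushFn (n : ℕ) (h : Fin n → ℝ) (x : Fin n → ℝ) : Fin n → ℝ :=
  (⨆ i, x i / h i) • h

open Set

theorem frontier_Iic_pi {ι α : Type*} [Finite ι] [TopologicalSpace α] [LinearOrder α]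
    [OrderTopology α] [DenselyOrdered α] [NoMaxOrder α] (a : ι → α) :
    frontier (Iic a) = {z | z ≤ a ∧ ∃ i, z i = a i} := by
  rw [← pi_univ_Iic, frontier, closure_pi_set, interior_pi_set finite_univ]
  ext z
  simp only [closure_Iic, interior_Iic, mem_sdiff, mem_univ_pi, mem_Iic, mem_Iio, not_forall,
    not_lt, mem_ofPred_eq, Pi.le_def]
  exact and_congr_right fun hle => exists_congr fun i => ⟨(hle i).antisymm, Eq.ge⟩

theorem ciSup_eq_iff_of_finite {ι α : Type*} [Finite ι] [Nonempty ι]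
    [ConditionallyCompleteLinearOrder α] {f : ι → α} {a : α} :
    ⨆ i, f i = a ↔ (∀ i, f i ≤ a) ∧ ∃ i, f i = a := by
  constructor
  · rintro rfl
    exact ⟨le_ciSup (Finite.bddAbove_range f), exists_eq_ciSup_of_finite⟩
  · rintro ⟨hle, i, rfl⟩
    exact (ciSup_le hle).antisymm (le_ciSup (Finite.bddAbove_range f) i)

theorem pushFn_eq_smul_iff {n : ℕ} {h : Fin n → ℝ} (hh : h ≠ 0) (x : Fin n → ℝ) (s : ℝ) :
    pushFn n h x = s • h ↔ ⨆ i, x i / h i = s :=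
  (smul_left_injective ℝ hh).eq_iff

/-- the topological frontier of `γ = (-∞,0]ⁿ` in `ℝⁿ` is
`∂γ = {z : z_i ≤ 0 for all i, and z_i = 0 for some i}`, and for every `s ∈ ℝ` the fiber of
the push function over `y = s • h` is `p_{L_h}⁻¹({y}) = y + ∂γ`. -/
theorem frontier_orthant_and_pushFn_fiber
    (n : ℕ) (hn : 1 ≤ n) (h : Fin n → ℝ) (hpos : ∀ i, 0 < h i) (s : ℝ) :
    (frontier {x : Fin n → ℝ | ∀ i, x i ≤ 0}
        = {z : Fin n → ℝ | (∀ i, z i ≤ 0) ∧ ∃ i, z i = 0}) ∧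
    (pushFn n h ⁻¹' {s • h}
        = (s • h) +ᵥ frontier {x : Fin n → ℝ | ∀ i, x i ≤ 0}) := by
  have hfrontier : frontier {x : Fin n → ℝ | ∀ i, x i ≤ 0}
      = {z : Fin n → ℝ | (∀ i, z i ≤ 0) ∧ ∃ i, z i = 0} := frontier_Iic_pi 0
  refine ⟨hfrontier, ?_⟩
  have : Nonempty (Fin n) := ⟨⟨0, hn⟩⟩
  have hh : h ≠ 0 := fun h0 => (hpos ⟨0, hn⟩).ne' (congrFun h0 _)
  ext x
  rw [mem_vadd_set_iff_neg_vadd_mem, hfrontier, mem_preimage, mem_singleton_iff,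
    pushFn_eq_smul_iff hh, ciSup_eq_iff_of_finite]
  simp only [mem_ofPred_eq, vadd_eq_add, neg_add_eq_sub, Pi.sub_apply, Pi.smul_apply, smul_eq_mul,
    sub_nonpos, sub_eq_zero]
  exact and_congr (forall_congr' fun i => div_le_iff₀ (hpos i))
    (exists_congr fun i => div_eq_iff (hpos i).ne')
end

section
/- Fix an integer n ≥ 1 and h ∈ ℝⁿ with h_i > 0 for every i and max_i h_i = 1. Then the push function p_{L_h} is Lipschitz with constant 1/(min_i h_i) with respect to the sup norm ‖x‖_∞ = max_i |x_i|, and this constant is optimal: there exist x ≠ x′ in ℝⁿ with ‖p_{L_h}(x) − p_{L_h}(x′)‖_∞ = (1/(min_i h_i)) · ‖x − x′‖_∞ (for instance x = e_{i₀} the i₀-th standard basis vector where h_{i₀} = min_i h_i, and x′ = 0). -/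
section Finite

variable {ι : Type*} [Fintype ι]

theorem ciSup_sub_ciSup_le_norm_sub [Nonempty ι] (f g : ι → ℝ) :
    (⨆ i, f i) - ⨆ i, g i ≤ ‖f - g‖ := by
  rw [sub_le_iff_le_add]
  refine ciSup_le fun i => ?_
  have hfg : f i - g i ≤ ‖f - g‖ :=
    (le_abs_self _).trans (by simpa using norm_le_pi_norm (f - g) i)
  have hg : g i ≤ ⨆ j, g j := le_ciSup (Finite.bddAbove_range g) i
  linarith

theorem abs_ciSup_sub_ciSup_le_norm_sub [Nonempty ι] (f g : ι → ℝ) :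
    |(⨆ i, f i) - ⨆ i, g i| ≤ ‖f - g‖ :=
  abs_sub_le_iff.2
    ⟨ciSup_sub_ciSup_le_norm_sub f g, norm_sub_rev f g ▸ ciSup_sub_ciSup_le_norm_sub g f⟩

theorem norm_div_le_norm_div_of_le {x h : ι → ℝ} {m : ℝ} (hm : 0 < m) (hmh : ∀ i, m ≤ h i) :
    ‖x / h‖ ≤ ‖x‖ / m := by
  refine (pi_norm_le_iff_of_nonneg (by positivity)).2 fun i => ?_
  rw [Pi.div_apply, norm_div]
  exact div_le_div₀ (norm_nonneg _) (norm_le_pi_norm x i) hm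
    ((hmh i).trans (Real.le_norm_self _))

theorem pi_norm_eq_ciSup_of_nonneg [Nonempty ι] {h : ι → ℝ} (h0 : ∀ i, 0 ≤ h i) :
    ‖h‖ = ⨆ i, h i := by
  obtain ⟨i₀, hi₀⟩ := exists_eq_ciSup_of_finite (f := h)
  refine le_antisymm ((pi_norm_le_iff_of_nonneg (hi₀ ▸ h0 i₀)).2 fun i => ?_)
    (ciSup_le fun i => (Real.le_norm_self _).trans (norm_le_pi_norm h i))
  rw [Real.norm_of_nonneg (h0 i)]
  exact le_ciSup (Finite.bddAbove_range h) i

theorem ciSup_single_div_eq [DecidableEq ι] (h : ι → ℝ) (i₀ : ι) {c : ℝ} (hc : 0 ≤ c / h i₀) :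
    ⨆ i, (Pi.single i₀ c : ι → ℝ) i / h i = c / h i₀ := by
  have : Nonempty ι := ⟨i₀⟩
  refine le_antisymm (ciSup_le fun i => ?_) (le_ciSup_of_le (Finite.bddAbove_range _) i₀ (by simp))
  rcases eq_or_ne i i₀ with rfl | hi
  · simp
  · simpa [Pi.single_eq_of_ne hi] using hc

end Finite

section PushFn

variable {n : ℕ} {h : Fin n → ℝ}

theorem pushFn_sub_pushFn (x y : Fin n → ℝ) :
    pushFn n h x - pushFn n h y = ((⨆ i, x i / h i) - ⨆ i, y i / h i) • h :=
  (sub_smul _ _ _).symm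

theorem norm_pushFn_sub_le [Nonempty (Fin n)] {m : ℝ} (hm : 0 < m) (hmh : ∀ i, m ≤ h i)
    (x y : Fin n → ℝ) : ‖pushFn n h x - pushFn n h y‖ ≤ ‖h‖ / m * ‖x - y‖ :=
  calc ‖pushFn n h x - pushFn n h y‖
      = |(⨆ i, (x / h) i) - ⨆ i, (y / h) i| * ‖h‖ := by
        rw [pushFn_sub_pushFn, norm_smul, Real.norm_eq_abs]; rfl
    _ ≤ ‖x / h - y / h‖ * ‖h‖ := by gcongr; exact abs_ciSup_sub_ciSup_le_norm_sub _ _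
    _ ≤ ‖x - y‖ / m * ‖h‖ := by
        rw [show x / h - y / h = (x - y) / h from funext fun i => (sub_div _ _ _).symm]
        gcongr
        exact norm_div_le_norm_div_of_le hm hmh
    _ = ‖h‖ / m * ‖x - y‖ := by ring

theorem pushFn_zero : pushFn n h 0 = 0 := by
  simp [pushFn]

theorem pushFn_single {i₀ : Fin n} {c : ℝ} (hc : 0 ≤ c / h i₀) :
    pushFn n h (Pi.single i₀ c) = (c / h i₀) • h := by
  rw [pushFn, ciSup_single_div_eq h i₀ hc]

end PushFn

/-- for `h` with positive coordinates and `max_i h_i = 1`, the push function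
`p_{L_h}` is `1/(min_i h_i)`-Lipschitz for the sup norm (the norm of `Fin n → ℝ`), and this
constant is optimal: it is attained at some pair `x ≠ x'`. -/
theorem pushFn_lipschitz_and_optimal
    (n : ℕ) (hn : 1 ≤ n) (h : Fin n → ℝ) (hpos : ∀ i, 0 < h i)
    (hmax : (⨆ i, h i) = 1) :
    (∀ x x' : Fin n → ℝ,
      ‖pushFn n h x - pushFn n h x'‖ ≤ (1 / ⨅ i, h i) * ‖x - x'‖) ∧
    (∃ x x' : Fin n → ℝ, x ≠ x' ∧
      ‖pushFn n h x - pushFn n h x'‖ = (1 / ⨅ i, h i) * ‖x - x'‖) := by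
  have : Nonempty (Fin n) := ⟨⟨0, hn⟩⟩
  obtain ⟨i₀, hi₀⟩ := exists_eq_ciInf_of_finite (f := h)
  have hmin : ∀ i, h i₀ ≤ h i := fun i => hi₀ ▸ ciInf_le (Finite.bddBelow_range h) i
  have hnorm : ‖h‖ = 1 := by rw [pi_norm_eq_ciSup_of_nonneg fun i => (hpos i).le, hmax]
  have hc : 0 ≤ 1 / h i₀ := (one_div_pos.2 (hpos i₀)).le
  rw [← hi₀]
  refine ⟨fun x x' => hnorm ▸ norm_pushFn_sub_le (hpos i₀) hmin x x',
    Pi.single i₀ 1, 0, Pi.single_ne_zero_iff.2 one_ne_zero, ?_⟩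
  rw [pushFn_single hc, pushFn_zero, sub_zero, sub_zero, norm_smul, hnorm, Pi.norm_single,
    Real.norm_of_nonneg hc, norm_one]
end

section
/- Let V be a nontrivial finite-dimensional real normed vector space, γ ⊆ V a closed proper convex cone with nonempty interior, and u a continuous linear functional on V lying in the interior of the polar cone γ°. Then for every real x < 0 the set {z ∈ γ : u(z) = x} is empty, and for every real x ≥ 0 the set {z ∈ γ : u(z) = x} is a nonempty compact convex subset of V. -/
open Pointwise

/-! If `u` lies in the interior of the polar cone, then `u - ε • g` is still nonnegative
on `γ` for a norming functional `g` of any `z`, so `ε ‖z‖ ≤ u z` on `γ`. Hence the slices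
of `γ` are bounded (so compact in finite dimension), and a nonzero point `v` of `γ` has
`u v > 0`, so rescaling `v` reaches every level `x > 0`. -/

theorem isBounded_setOf_le_of_mul_norm_le {E : Type*} [SeminormedAddCommGroup E] {s : Set E}
    {u : E → ℝ} {ε : ℝ} (hε : 0 < ε) (hs : ∀ z ∈ s, ε * ‖z‖ ≤ u z) (x : ℝ) :
    Bornology.IsBounded {z ∈ s | u z ≤ x} := by
  refine isBounded_iff_forall_norm_le.mpr ⟨x / ε, fun z ⟨hz, hzx⟩ => ?_⟩
  rw [le_div_iff₀ hε, mul_comm]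
  exact (hs z hz).trans hzx

section

variable {V : Type*} [NormedAddCommGroup V] [NormedSpace ℝ V]

theorem exists_pos_mul_norm_le_of_mem_interior_polar {s : Set V} {u : V →L[ℝ] ℝ}
    (hu : u ∈ interior {w : V →L[ℝ] ℝ | ∀ x ∈ s, 0 ≤ w x}) :
    ∃ ε > 0, ∀ z ∈ s, ε * ‖z‖ ≤ u z := by
  obtain ⟨ε, hε, hball⟩ := Metric.isOpen_iff.mp isOpen_interior u hu
  refine ⟨ε / 2, half_pos hε, fun z hz => ?_⟩
  rcases eq_or_ne z 0 with rfl | hz0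
  · simp
  obtain ⟨g, hg_norm, hgz⟩ := exists_dual_vector ℝ z (norm_ne_zero_iff.mpr hz0)
  have hmem : u - (ε / 2) • g ∈ Metric.ball u ε := by
    rw [Metric.mem_ball, dist_eq_norm, sub_sub_cancel_left, norm_neg, norm_smul, hg_norm,
      Real.norm_of_nonneg (half_pos hε).le, mul_one]
    exact half_lt_self hε
  have := interior_subset (hball hmem) z hz
  simp only [sub_apply, smul_apply, smul_eq_mul, hgz, RCLike.ofReal_real_eq_id, id] at this
  linarith

theorem exists_mem_ne_zero_of_interior_nonempty [Nontrivial V] {s : Set V}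
    (hs : (interior s).Nonempty) : ∃ v ∈ s, v ≠ 0 := by
  by_contra! h
  have hsub : s ⊆ {0} := fun v hv => h v hv
  simpa [interior_singleton] using interior_mono hsub hs.some_mem

end

theorem cone_slice_empty_or_nonempty_compact_convex_general
    {V : Type*} [NormedAddCommGroup V] [NormedSpace ℝ V] [FiniteDimensional ℝ V]
    [Nontrivial V]
    (γ : Set V) (hzero : (0 : V) ∈ γ)
    (hsmul : ∀ t : ℝ, 0 < t → t • γ ⊆ γ)
    (hconv : Convex ℝ γ)
    (hclosed : IsClosed γ)
    (hint : (interior γ).Nonempty)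
    (u : V →L[ℝ] ℝ)
    (hu : u ∈ interior {w : V →L[ℝ] ℝ | ∀ x ∈ γ, 0 ≤ w x}) :
    ∀ x : ℝ,
      (x < 0 → {z ∈ γ | u z = x} = ∅) ∧
      (0 ≤ x → ({z ∈ γ | u z = x}.Nonempty ∧ IsCompact {z ∈ γ | u z = x} ∧
        Convex ℝ {z ∈ γ | u z = x})) := by
  obtain ⟨ε, hε, hu_ge⟩ := exists_pos_mul_norm_le_of_mem_interior_polar hu
  have hu_nonneg : ∀ z ∈ γ, 0 ≤ u z := interior_subset hu
  obtain ⟨v, hvγ, hv0⟩ := exists_mem_ne_zero_of_interior_nonempty hint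
  have huv : 0 < u v := (mul_pos hε (norm_pos_iff.mpr hv0)).trans_le (hu_ge v hvγ)
  intro x
  refine ⟨fun hx => Set.eq_empty_of_forall_notMem fun z ⟨hz, hzx⟩ =>
    (hu_nonneg z hz).not_gt (hzx ▸ hx), fun hx => ⟨?_, ?_, ?_⟩⟩
  · rcases hx.eq_or_lt with rfl | hx
    · exact ⟨0, hzero, map_zero u⟩
    · refine ⟨(x / u v) • v, hsmul _ (div_pos hx huv) (Set.smul_mem_smul_set hvγ), ?_⟩
      rw [map_smul, smul_eq_mul, div_mul_cancel₀ x huv.ne']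
  · refine Metric.isCompact_of_isClosed_isBounded
      (hclosed.inter (isClosed_eq u.continuous continuous_const)) ?_
    exact (isBounded_setOf_le_of_mul_norm_le hε hu_ge x).subset
      fun z ⟨hz, hzx⟩ => ⟨hz, hzx.le⟩
  · exact hconv.inter (convex_hyperplane u.isLinear x)

/-- let `γ` be a closed proper convex cone with nonempty interior in a
nontrivial finite-dimensional real normed vector space and `u` a continuous linear
functional in the interior of the polar cone `γ°`. For `x < 0` the slice
`{z ∈ γ : u z = x}` is empty, and for `x ≥ 0` it is a nonempty compact convex subset. -/
theorem cone_slice_empty_or_nonempty_compact_convex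
    {V : Type*} [NormedAddCommGroup V] [NormedSpace ℝ V] [FiniteDimensional ℝ V]
    [Nontrivial V]
    (γ : Set V) (hzero : (0 : V) ∈ γ)
    (hsmul : ∀ t : ℝ, 0 < t → t • γ ⊆ γ)
    (hconv : Convex ℝ γ)
    (hproper : γ ∩ (-γ) = {0})
    (hclosed : IsClosed γ)
    (hint : (interior γ).Nonempty)
    (u : V →L[ℝ] ℝ)
    (hu : u ∈ interior {w : V →L[ℝ] ℝ | ∀ x ∈ γ, 0 ≤ w x}) :
    ∀ x : ℝ,
      (x < 0 → {z ∈ γ | u z = x} = ∅) ∧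
      (0 ≤ x → ({z ∈ γ | u z = x}.Nonempty ∧ IsCompact {z ∈ γ | u z = x} ∧
        Convex ℝ {z ∈ γ | u z = x})) :=
  cone_slice_empty_or_nonempty_compact_convex_general γ hzero hsmul hconv hclosed hint u hu
end

section
/- Let V be a finite-dimensional real normed vector space and γ ⊆ V a closed cone (0 ∈ γ and t • γ ⊆ γ for every real t > 0, γ closed). If a continuous linear functional u on V belongs to the topological boundary ∂γ° of the polar cone γ° in V*, then there exists x ∈ γ with x ≠ 0 and u(x) = 0; consequently ker(u) ∩ γ contains the half-line ℝ_{≥0} • x. -/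
/-!
If `u` is strictly positive on the nonzero points of `γ`, then by compactness of the unit
sphere it is bounded below by some `c > 0` on `γ ∩ S(0, 1)`, so every functional within
operator-norm distance `c` of `u` is still nonnegative there, hence on the cone `γ`: `u` lies in
the interior of `γ°`. A boundary point of the closed set `γ°` is therefore nonnegative on `γ`
without being positive on `γ \ {0}`.
-/

open Pointwise Metric

section

variable {V : Type*} [NormedAddCommGroup V] [NormedSpace ℝ V]

def polarCone (γ : Set V) : Set (V →L[ℝ] ℝ) := {w | ∀ x ∈ γ, 0 ≤ w x}

theorem isClosed_polarCone (γ : Set V) : IsClosed (polarCone γ) := by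
  simp only [polarCone, Set.ofPred_forall]
  exact isClosed_biInter fun x _ =>
    isClosed_le continuous_const (ContinuousLinearMap.apply ℝ ℝ x).continuous

theorem inv_norm_smul_mem_inter_sphere {γ : Set V} (hsmul : ∀ t : ℝ, 0 < t → t • γ ⊆ γ)
    {x : V} (hx : x ∈ γ) (hx0 : x ≠ 0) : ‖x‖⁻¹ • x ∈ γ ∩ sphere 0 1 :=
  ⟨hsmul _ (inv_pos.2 (norm_pos_iff.2 hx0)) (Set.smul_mem_smul_set hx),
    by simp [norm_smul, inv_mul_cancel₀ (norm_ne_zero_iff.2 hx0)]⟩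

theorem mem_polarCone_of_nonneg_on_sphere {γ : Set V} (hsmul : ∀ t : ℝ, 0 < t → t • γ ⊆ γ)
    {w : V →L[ℝ] ℝ} (hw : ∀ y ∈ γ ∩ sphere 0 1, 0 ≤ w y) : w ∈ polarCone γ := by
  intro x hx
  rcases eq_or_ne x 0 with rfl | hx0
  · simp
  have hy := hw _ (inv_norm_smul_mem_inter_sphere hsmul hx hx0)
  rw [map_smul, smul_eq_mul] at hy
  exact nonneg_of_mul_nonneg_right hy (inv_pos.2 (norm_pos_iff.2 hx0))

theorem mem_interior_polarCone_of_pos [FiniteDimensional ℝ V] {γ : Set V}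
    (hsmul : ∀ t : ℝ, 0 < t → t • γ ⊆ γ) (hclosed : IsClosed γ) {u : V →L[ℝ] ℝ}
    (hpos : ∀ x ∈ γ, x ≠ 0 → 0 < u x) : u ∈ interior (polarCone γ) := by
  have hcompact : IsCompact (γ ∩ sphere (0 : V) 1) :=
    (isCompact_sphere 0 1).inter_left hclosed
  obtain ⟨c, hc, hcu⟩ := hcompact.exists_forall_le' u.continuous.continuousOn
    fun y hy => hpos y hy.1 (ne_zero_of_mem_unit_sphere ⟨y, hy.2⟩)
  refine mem_interior_iff_mem_nhds.2 (mem_nhds_iff.2 ⟨c, hc, fun w hw => ?_⟩)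
  refine mem_polarCone_of_nonneg_on_sphere hsmul fun y hy => ?_
  have hwu : ‖w - u‖ < c := by rwa [mem_ball, dist_eq_norm] at hw
  have hdiff : |(w - u) y| ≤ ‖w - u‖ := by
    simpa [mem_sphere_zero_iff_norm.1 hy.2] using (w - u).le_opNorm y
  have hcy := hcu y hy
  rw [sub_apply] at hdiff
  linarith [neg_abs_le (w y - u y)]

end

/-- if `γ` is a closed cone in a finite-dimensional real normed vector space
and `u` belongs to the topological boundary of the polar cone `γ°` in the continuous dual
(with the operator norm), then there is a nonzero `x ∈ γ` with `u x = 0`; consequently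
`ker u ∩ γ` contains the half-line `ℝ≥0 • x`. -/
theorem boundary_polar_kills_ray
    {V : Type*} [NormedAddCommGroup V] [NormedSpace ℝ V] [FiniteDimensional ℝ V]
    (γ : Set V) (hzero : (0 : V) ∈ γ)
    (hsmul : ∀ t : ℝ, 0 < t → t • γ ⊆ γ)
    (hclosed : IsClosed γ)
    (u : V →L[ℝ] ℝ)
    (hu : u ∈ frontier {w : V →L[ℝ] ℝ | ∀ x ∈ γ, 0 ≤ w x}) :
    ∃ x ∈ γ, x ≠ 0 ∧ u x = 0 ∧
      ∀ t : ℝ, 0 ≤ t → t • x ∈ {z : V | u z = 0} ∩ γ := by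
  change u ∈ frontier (polarCone γ) at hu
  have hu_nonneg : u ∈ polarCone γ := (isClosed_polarCone γ).frontier_subset hu
  obtain ⟨x, hx, hx0, hux⟩ : ∃ x ∈ γ, x ≠ 0 ∧ ¬0 < u x := by
    by_contra! hpos
    exact hu.2 (mem_interior_polarCone_of_pos hsmul hclosed hpos)
  have hux0 : u x = 0 := le_antisymm (not_lt.1 hux) (hu_nonneg x hx)
  refine ⟨x, hx, hx0, hux0, fun t ht => ⟨by simp [hux0], ?_⟩⟩
  rcases ht.eq_or_lt with rfl | ht
  · simpa using hzero
  · exact hsmul t ht (Set.smul_mem_smul_set hx)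
end

section
/- Fix an integer n ≥ 1, h ∈ ℝⁿ with h_i > 0 for every i, and real numbers a < b, and let γ = (−∞,0]ⁿ. For j = 1,…,n set R_j := {x ∈ ℝⁿ : x_i < b·h_i for all i} ∩ {x ∈ ℝⁿ : x_j > a·h_j}, and for a nonempty subset I ⊆ {1,…,n} set R_I := ⋂_{i∈I} R_i. Then each R_I is a nonempty open convex subset of ℝⁿ (it contains the open box ∏_i (a·h_i, b·h_i)), and R_I + γ = {x ∈ ℝⁿ : x_i < b·h_i for all i}; in particular R_I + γ = R_J + γ for all nonempty subsets I, J of {1,…,n}. -/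
open Pointwise

/-- The set `R_j = {x : x_i < b h_i for all i} ∩ {x : x_j > a h_j}`. -/
def Rset (n : ℕ) (h : Fin n → ℝ) (a b : ℝ) (j : Fin n) : Set (Fin n → ℝ) :=
  {x : Fin n → ℝ | ∀ i, x i < b * h i} ∩ {x : Fin n → ℝ | a * h j < x j}

section Rset

variable {n : ℕ} {h : Fin n → ℝ} {a b : ℝ}

lemma Rset_eq_pi_inter (j : Fin n) :
    Rset n h a b j = Set.univ.pi (fun i => Set.Iio (b * h i)) ∩ {x | a * h j < x j} := by
  ext x
  simp [Rset]

lemma isOpen_Rset (j : Fin n) : IsOpen (Rset n h a b j) := by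
  rw [Rset_eq_pi_inter]
  exact (isOpen_set_pi Set.finite_univ fun i _ => isOpen_Iio).inter
    (isOpen_lt continuous_const (continuous_apply j))

lemma convex_Rset (j : Fin n) : Convex ℝ (Rset n h a b j) := by
  rw [Rset_eq_pi_inter]
  exact (convex_pi fun i _ => convex_Iio _).inter
    (convex_halfSpace_gt (LinearMap.proj j).isLinear _)

lemma pi_Ioo_nonempty (hlt : ∀ i, a * h i < b * h i) :
    (Set.univ.pi fun i => Set.Ioo (a * h i) (b * h i)).Nonempty :=
  Set.univ_pi_nonempty_iff.mpr fun i => Set.nonempty_Ioo.mpr (hlt i)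

lemma pi_Ioo_subset_biInter_Rset (I : Set (Fin n)) :
    Set.univ.pi (fun i => Set.Ioo (a * h i) (b * h i)) ⊆ ⋂ i ∈ I, Rset n h a b i := by
  intro x hx
  simp only [Set.mem_univ_pi, Set.mem_Ioo] at hx
  exact Set.mem_biInter fun j _ => ⟨fun i => (hx i).2, (hx j).1⟩

/-- Any `x` below `b h` splits as `(x ⊔ m) + (x - x ⊔ m)` for a point `m` of the open box;
the first summand lies in every `R_j`, the second in `γ`. -/
lemma biInter_Rset_add_nonpos {I : Set (Fin n)} (hI : I.Nonempty)
    (hlt : ∀ i, a * h i < b * h i) :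
    (⋂ i ∈ I, Rset n h a b i) + {z : Fin n → ℝ | ∀ i, z i ≤ 0}
      = {x : Fin n → ℝ | ∀ i, x i < b * h i} := by
  ext x
  constructor
  · rintro ⟨r, hr, z, hz, rfl⟩ i
    obtain ⟨j, hj⟩ := hI
    have hr_lt : r i < b * h i := (Set.mem_iInter₂.mp hr j hj).1 i
    show r i + z i < b * h i
    linarith [hz i]
  · intro hx
    obtain ⟨m, hm⟩ := pi_Ioo_nonempty hlt
    simp only [Set.mem_univ_pi, Set.mem_Ioo] at hm
    refine ⟨x ⊔ m, ?_, x - x ⊔ m, fun i => sub_nonpos.mpr le_sup_left, add_sub_cancel _ _⟩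
    exact Set.mem_biInter fun j _ =>
      ⟨fun i => max_lt (hx i) (hm i).2, (hm j).1.trans_le le_sup_right⟩

end Rset

theorem Rset_inter_properties_general
    (n : ℕ) (h : Fin n → ℝ) (hpos : ∀ i, 0 < h i)
    (a b : ℝ) (hab : a < b) :
    (∀ I : Set (Fin n), I.Nonempty →
      (Set.univ.pi (fun i => Set.Ioo (a * h i) (b * h i)) ⊆ ⋂ i ∈ I, Rset n h a b i) ∧
      (⋂ i ∈ I, Rset n h a b i).Nonempty ∧
      IsOpen (⋂ i ∈ I, Rset n h a b i) ∧
      Convex ℝ (⋂ i ∈ I, Rset n h a b i) ∧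
      ((⋂ i ∈ I, Rset n h a b i) + {z : Fin n → ℝ | ∀ i, z i ≤ 0}
        = {x : Fin n → ℝ | ∀ i, x i < b * h i})) ∧
    (∀ I J : Set (Fin n), I.Nonempty → J.Nonempty →
      (⋂ i ∈ I, Rset n h a b i) + {z : Fin n → ℝ | ∀ i, z i ≤ 0}
        = (⋂ i ∈ J, Rset n h a b i) + {z : Fin n → ℝ | ∀ i, z i ≤ 0}) := by
  have hlt : ∀ i, a * h i < b * h i := fun i => mul_lt_mul_of_pos_right hab (hpos i)
  refine ⟨fun I hI => ⟨pi_Ioo_subset_biInter_Rset I,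
      (pi_Ioo_nonempty hlt).mono (pi_Ioo_subset_biInter_Rset I),
      I.toFinite.isOpen_biInter fun j _ => isOpen_Rset j,
      convex_iInter₂ fun j _ => convex_Rset j,
      biInter_Rset_add_nonpos hI hlt⟩, fun I J hI hJ => ?_⟩
  rw [biInter_Rset_add_nonpos hI hlt, biInter_Rset_add_nonpos hJ hlt]

/-- for `h` with positive coordinates and `a < b`, each `R_I = ⋂_{i ∈ I} R_i`
(for `I ⊆ {1,…,n}` nonempty) contains the open box `∏_i (a h_i, b h_i)`, is a nonempty open
convex subset of `ℝⁿ`, and satisfies `R_I + γ = {x : x_i < b h_i for all i}` with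
`γ = (-∞,0]ⁿ`; in particular `R_I + γ = R_J + γ` for all nonempty `I, J`. -/
theorem Rset_inter_properties
    (n : ℕ) (hn : 1 ≤ n) (h : Fin n → ℝ) (hpos : ∀ i, 0 < h i)
    (a b : ℝ) (hab : a < b) :
    (∀ I : Set (Fin n), I.Nonempty →
      (Set.univ.pi (fun i => Set.Ioo (a * h i) (b * h i)) ⊆ ⋂ i ∈ I, Rset n h a b i) ∧
      (⋂ i ∈ I, Rset n h a b i).Nonempty ∧
      IsOpen (⋂ i ∈ I, Rset n h a b i) ∧
      Convex ℝ (⋂ i ∈ I, Rset n h a b i) ∧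
      ((⋂ i ∈ I, Rset n h a b i) + {z : Fin n → ℝ | ∀ i, z i ≤ 0}
        = {x : Fin n → ℝ | ∀ i, x i < b * h i})) ∧
    (∀ I J : Set (Fin n), I.Nonempty → J.Nonempty →
      (⋂ i ∈ I, Rset n h a b i) + {z : Fin n → ℝ | ∀ i, z i ≤ 0}
        = (⋂ i ∈ J, Rset n h a b i) + {z : Fin n → ℝ | ∀ i, z i ≤ 0}) :=
  Rset_inter_properties_general n h hpos a b hab
end

section
/- In ℝ² let X = {t • (−1, 1) : t ∈ [0,1]}, and for s ≥ 2 let Y_s be the convex hull of X ∪ {(0, s)}. With γ = (−∞,0]² and γ^a = [0,∞)², one has the equality of Minkowski sums Y_s + γ^a = X + γ^a. -/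
open Pointwise

/-!
Every point of `Y_s` lies above-right of a point of `X`: the new vertex is
`(0, s) = (-1, 1) + (1, s - 1)`. Since `X + γ^a` is convex and `γ^a + γ^a ⊆ γ^a`, this absorbs
the convex hull, while `X ⊆ Y_s` gives the other inclusion.
-/

theorem convexHull_add_eq_of_subset_add {E : Type*} [AddCommGroup E] [Module ℝ E]
    {X S C : Set E} (hXS : X ⊆ S) (hSX : S ⊆ X + C) (hXC : Convex ℝ (X + C))
    (hCC : C + C ⊆ C) : convexHull ℝ S + C = X + C := by
  refine (calc
      convexHull ℝ S + C ⊆ X + C + C := Set.add_subset_add_right (convexHull_min hSX hXC)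
      _ = X + (C + C) := add_assoc _ _ _
      _ ⊆ X + C := Set.add_subset_add_left hCC).antisymm ?_
  exact Set.add_subset_add_right (hXS.trans (subset_convexHull ℝ S))

/-- in `ℝ²`, let `X = {t • (-1, 1) : t ∈ [0,1]}` and, for `s ≥ 2`, let
`Y_s = conv(X ∪ {(0, s)})`. With `γ^a = [0,∞)²`, one has `Y_s + γ^a = X + γ^a`. -/
theorem convexHull_add_orthant_eq
    (s : ℝ) (hs : 2 ≤ s) :
    convexHull ℝ (((fun t : ℝ => t • ((-1 : ℝ), (1 : ℝ))) '' Set.Icc (0 : ℝ) 1)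
        ∪ {((0 : ℝ), s)})
      + {p : ℝ × ℝ | 0 ≤ p.1 ∧ 0 ≤ p.2}
    = ((fun t : ℝ => t • ((-1 : ℝ), (1 : ℝ))) '' Set.Icc (0 : ℝ) 1)
      + {p : ℝ × ℝ | 0 ≤ p.1 ∧ 0 ≤ p.2} := by
  have hX : (fun t : ℝ => t • ((-1 : ℝ), (1 : ℝ))) '' Set.Icc (0 : ℝ) 1
      = segment ℝ 0 ((-1 : ℝ), (1 : ℝ)) := by
    simp [segment_eq_image]
  have hC : {p : ℝ × ℝ | 0 ≤ p.1 ∧ 0 ≤ p.2} = Set.Ici 0 := rfl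
  have hCC : Set.Ici (0 : ℝ × ℝ) + Set.Ici 0 ⊆ Set.Ici 0 := by
    simpa using Set.Ici_add_Ici_subset (0 : ℝ × ℝ) 0
  have hvertex : ((0 : ℝ), s) ∈ segment ℝ 0 ((-1 : ℝ), (1 : ℝ)) + Set.Ici 0 :=
    ⟨(-1, 1), right_mem_segment ℝ _ _, (1, s - 1),
      ⟨zero_le_one, show (0 : ℝ) ≤ s - 1 by linarith⟩, by simp⟩
  rw [hX, hC]
  exact convexHull_add_eq_of_subset_add Set.subset_union_left
    (Set.union_subset (Set.subset_add_left _ Set.self_mem_Ici) (Set.singleton_subset_iff.2 hvertex))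
    ((convex_segment _ _).add (convex_Ici 0)) hCC
end
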